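/- Let k ≥ 1, n ≥ 2, and C = (c_0,…,c_k) ∈ {0,1}^{k+1} with c_0 = 0, and set λ = ∑_{j=2}^{n} F_j(C). Then for every 1 ≤ m ≤ n, O^u_C(n, m) ≤ n!^k · λ^{m−1} / (m−1)!. -/

import Mathlib

/-- `F j C = ∑_{β=0}^{k} C(k,β) · c_β / (j−1)^β`. -/
def F (k : ℕ) (C : ℕ → ℕ) (j : ℕ) : ℚ :=
  ∑ β ∈ Finset.range (k + 1), (k.choose β : ℚ) * (C β : ℚ) / ((j : ℚ) - 1) ^ β

/-- The unsigned `C` sequential optimization numbers `O^u_C(n, m)`. -/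
def Ou (k : ℕ) (C : ℕ → ℕ) (n : ℕ) (m : ℤ) : ℚ :=
  if 1 ≤ m ∧ m ≤ (n : ℤ) then
    ((n - 1).factorial : ℚ) ^ k *
      ∑ S ∈ (Finset.Icc 2 n).powersetCard (m.toNat - 1),
        (∏ j ∈ S, F k C j) * ∏ j ∈ Finset.Icc 2 n \ S, F k (fun β => 1 - C β) j
  else 0

/-- The `C` sequential optimization numbers `O_C(n, m) = O^u_C(n, m − c_k + 1)`. -/
def Oc (k : ℕ) (C : ℕ → ℕ) (n : ℕ) (m : ℤ) : ℚ :=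
  Ou k C n (m - C k + 1)

lemma key_ineq (s : Finset ℕ) (x : ℕ → ℚ) (hx : ∀ j ∈ s, 0 ≤ x j) (p : ℕ) :
    ((p : ℚ) + 1) * ∑ T ∈ s.powersetCard (p + 1), ∏ j ∈ T, x j
      ≤ (∑ j ∈ s, x j) * ∑ S ∈ s.powersetCard p, ∏ j ∈ S, x j := by
  have h1 : ((p : ℚ) + 1) * ∑ T ∈ s.powersetCard (p + 1), ∏ j ∈ T, x j
      = ∑ T ∈ s.powersetCard (p + 1), ∑ j ∈ T, x j * ∏ i ∈ T.erase j, x i := by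
    rw [Finset.mul_sum]
    refine Finset.sum_congr rfl fun T hT => ?_
    rw [Finset.mem_powersetCard] at hT
    have : ∀ j ∈ T, x j * ∏ i ∈ T.erase j, x i = ∏ i ∈ T, x i := fun j hj =>
      Finset.mul_prod_erase T x hj
    rw [Finset.sum_congr rfl this, Finset.sum_const, hT.2]
    push_cast
    ring
  have h2 : ∑ T ∈ s.powersetCard (p + 1), ∑ j ∈ T, x j * ∏ i ∈ T.erase j, x i
      = ∑ S ∈ s.powersetCard p, ∑ j ∈ s \ S, x j * ∏ i ∈ S, x i := by
    rw [Finset.sum_sigma', Finset.sum_sigma']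
    refine Finset.sum_nbij' (fun a => ⟨a.1.erase a.2, a.2⟩) (fun a => ⟨insert a.2 a.1, a.2⟩)
      ?_ ?_ ?_ ?_ ?_
    · rintro ⟨T, j⟩ hTj
      simp only [Finset.mem_sigma, Finset.mem_powersetCard] at hTj ⊢
      obtain ⟨⟨hTs, hTc⟩, hjT⟩ := hTj
      refine ⟨⟨(Finset.erase_subset _ _).trans hTs, ?_⟩, ?_⟩
      · rw [Finset.card_erase_of_mem hjT, hTc]; rfl
      · simp [Finset.mem_sdiff, hTs hjT]
    · rintro ⟨S, j⟩ hSj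
      simp only [Finset.mem_sigma, Finset.mem_powersetCard, Finset.mem_sdiff] at hSj ⊢
      obtain ⟨⟨hSs, hSc⟩, hjs, hjS⟩ := hSj
      refine ⟨⟨Finset.insert_subset hjs hSs, ?_⟩, Finset.mem_insert_self _ _⟩
      rw [Finset.card_insert_of_notMem hjS, hSc]
    · rintro ⟨T, j⟩ hTj
      simp only [Finset.mem_sigma, Finset.mem_powersetCard] at hTj
      simp [Finset.insert_erase hTj.2]
    · rintro ⟨S, j⟩ hSj
      simp only [Finset.mem_sigma, Finset.mem_powersetCard, Finset.mem_sdiff] at hSj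
      simp [Finset.erase_insert hSj.2.2]
    · rintro ⟨T, j⟩ hTj
      rfl
  rw [h1, h2, Finset.mul_sum]
  refine Finset.sum_le_sum fun S hS => ?_
  rw [Finset.mem_powersetCard] at hS
  have hSnn : 0 ≤ ∏ i ∈ S, x i := Finset.prod_nonneg fun i hi => hx i (hS.1 hi)
  calc ∑ j ∈ s \ S, x j * ∏ i ∈ S, x i
      ≤ ∑ j ∈ s, x j * ∏ i ∈ S, x i := by
        refine Finset.sum_le_sum_of_subset_of_nonneg (Finset.sdiff_subset) fun j hj _ =>
          mul_nonneg (hx j hj) hSnn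
    _ = (∑ j ∈ s, x j) * ∏ i ∈ S, x i := by rw [Finset.sum_mul]

lemma esymm_bound (s : Finset ℕ) (x : ℕ → ℚ) (hx : ∀ j ∈ s, 0 ≤ x j) (p : ℕ) :
    (p.factorial : ℚ) * ∑ T ∈ s.powersetCard p, ∏ j ∈ T, x j ≤ (∑ j ∈ s, x j) ^ p := by
  induction p with
  | zero => simp
  | succ p ih =>
    have hsum : 0 ≤ ∑ j ∈ s, x j := Finset.sum_nonneg hx
    have h := key_ineq s x hx p
    calc ((p + 1).factorial : ℚ) * ∑ T ∈ s.powersetCard (p + 1), ∏ j ∈ T, x j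
        = (p.factorial : ℚ) * (((p : ℚ) + 1) * ∑ T ∈ s.powersetCard (p + 1), ∏ j ∈ T, x j) := by
          rw [Nat.factorial_succ]; push_cast; ring
      _ ≤ (p.factorial : ℚ) * ((∑ j ∈ s, x j) * ∑ S ∈ s.powersetCard p, ∏ j ∈ S, x j) := by
          exact mul_le_mul_of_nonneg_left h (by positivity)
      _ = (∑ j ∈ s, x j) * ((p.factorial : ℚ) * ∑ S ∈ s.powersetCard p, ∏ j ∈ S, x j) := by ring
      _ ≤ (∑ j ∈ s, x j) * (∑ j ∈ s, x j) ^ p := mul_le_mul_of_nonneg_left ih hsum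
      _ = (∑ j ∈ s, x j) ^ (p + 1) := by ring

lemma F_nonneg (k : ℕ) (C : ℕ → ℕ) (j : ℕ) (hj : 2 ≤ j) : 0 ≤ F k C j := by
  have h1 : (1 : ℚ) ≤ (j : ℚ) - 1 := by
    have : (2 : ℚ) ≤ (j : ℚ) := by exact_mod_cast hj
    linarith
  refine Finset.sum_nonneg fun β _ => ?_
  positivity

lemma F_add (k : ℕ) (C : ℕ → ℕ) (hC : ∀ β ≤ k, C β ≤ 1) (j : ℕ) (hj : 2 ≤ j) :
    F k C j + F k (fun β => 1 - C β) j = ((j : ℚ) / ((j : ℚ) - 1)) ^ k := by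
  have h1 : (1 : ℚ) ≤ (j : ℚ) - 1 := by
    have : (2 : ℚ) ≤ (j : ℚ) := by exact_mod_cast hj
    linarith
  have h0 : ((j : ℚ) - 1) ≠ 0 := by linarith
  rw [F, F, ← Finset.sum_add_distrib]
  have : ∀ β ∈ Finset.range (k + 1),
      (k.choose β : ℚ) * (C β : ℚ) / ((j : ℚ) - 1) ^ β +
        (k.choose β : ℚ) * ((1 - C β : ℕ) : ℚ) / ((j : ℚ) - 1) ^ β
      = (k.choose β : ℚ) * (1 / ((j : ℚ) - 1)) ^ β := by
    intro β hβ
    rw [Finset.mem_range] at hβ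
    have hCβ : C β ≤ 1 := hC β (by omega)
    have hcast : ((1 - C β : ℕ) : ℚ) = 1 - (C β : ℚ) := by
      rw [Nat.cast_sub hCβ]; norm_num
    rw [hcast]
    rw [← add_div, one_div, inv_pow, div_eq_mul_inv]
    ring
  rw [Finset.sum_congr rfl this]
  have hpow : ((j : ℚ) / ((j : ℚ) - 1)) ^ k = (1 / ((j : ℚ) - 1) + 1) ^ k := by
    congr 1
    field_simp
    ring
  rw [hpow, add_pow]
  refine Finset.sum_congr rfl fun β _ => ?_
  simp [mul_comm]

lemma telescope (n : ℕ) (hn : 2 ≤ n) :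
    ∏ j ∈ Finset.Icc 2 n, ((j : ℚ) / ((j : ℚ) - 1)) = (n : ℚ) := by
  induction n with
  | zero => omega
  | succ n ih =>
    rcases Nat.lt_or_ge n 2 with h | h
    · interval_cases n
      · omega
      · norm_num
    · rw [Finset.prod_Icc_succ_top (by omega), ih h]
      have h0 : (n : ℚ) ≠ 0 := by positivity
      have : ((n : ℚ) + 1) - 1 = (n : ℚ) := by ring
      push_cast
      rw [this]
      field_simp

theorem stmt12 (k n m : ℕ) (hk : 1 ≤ k) (hn : 2 ≤ n) (hm : 1 ≤ m) (hmn : m ≤ n)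
    (C : ℕ → ℕ) (hC : ∀ β ≤ k, C β ≤ 1) (hC0 : C 0 = 0) :
    Ou k C n (m : ℤ)
      ≤ (n.factorial : ℚ) ^ k * (∑ j ∈ Finset.Icc 2 n, F k C j) ^ (m - 1)
          / ((m - 1).factorial : ℚ) := by
  have hcond : (1 : ℤ) ≤ (m : ℤ) ∧ (m : ℤ) ≤ (n : ℤ) := ⟨by exact_mod_cast hm, by exact_mod_cast hmn⟩
  rw [Ou, if_pos hcond]
  have htn : ((m : ℤ).toNat - 1) = m - 1 := by simp
  rw [htn]
  set s := Finset.Icc 2 n with hs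
  set p := m - 1 with hp
  have hmem : ∀ j ∈ s, 2 ≤ j := fun j hj => (Finset.mem_Icc.mp hj).1
  have hFnn : ∀ j ∈ s, 0 ≤ F k C j := fun j hj => F_nonneg k C j (hmem j hj)
  have hnfac : (0 : ℚ) < ((n - 1).factorial : ℚ) ^ k := by positivity
  have hratio1 : ∀ j ∈ s, (1 : ℚ) ≤ ((j : ℚ) / ((j : ℚ) - 1)) ^ k := by
    intro j hj
    have h2 : (2 : ℚ) ≤ (j : ℚ) := by exact_mod_cast hmem j hj
    have : (1 : ℚ) ≤ (j : ℚ) / ((j : ℚ) - 1) := by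
      rw [le_div_iff₀ (by linarith)]; linarith
    simpa using pow_le_pow_left₀ (by norm_num) this k
  have hterm : ∀ S ∈ s.powersetCard p,
      (∏ j ∈ S, F k C j) * ∏ j ∈ s \ S, F k (fun β => 1 - C β) j
        ≤ (n : ℚ) ^ k * ∏ j ∈ S, F k C j := by
    intro S hS
    rw [Finset.mem_powersetCard] at hS
    have hSnn : 0 ≤ ∏ j ∈ S, F k C j := Finset.prod_nonneg fun j hj => hFnn j (hS.1 hj)
    have hdiff : ∏ j ∈ s \ S, F k (fun β => 1 - C β) j ≤ (n : ℚ) ^ k := by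
      calc ∏ j ∈ s \ S, F k (fun β => 1 - C β) j
          ≤ ∏ j ∈ s \ S, ((j : ℚ) / ((j : ℚ) - 1)) ^ k := by
            refine Finset.prod_le_prod (fun j hj => F_nonneg k _ j
              (hmem j (Finset.mem_sdiff.mp hj).1)) fun j hj => ?_
            have hj2 := hmem j (Finset.mem_sdiff.mp hj).1
            have := F_add k C hC j hj2
            have := F_nonneg k C j hj2
            linarith
        _ ≤ ∏ j ∈ s, ((j : ℚ) / ((j : ℚ) - 1)) ^ k := by
            rw [← Finset.prod_sdiff hS.1]
            have h1 : (1 : ℚ) ≤ ∏ j ∈ S, ((j : ℚ) / ((j : ℚ) - 1)) ^ k := by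
              have := Finset.prod_le_prod (s := S) (f := fun _ : ℕ => (1 : ℚ))
                (g := fun j : ℕ => ((j : ℚ) / ((j : ℚ) - 1)) ^ k)
                (fun _ _ => zero_le_one) (fun j hj => hratio1 j (hS.1 hj))
              simpa using this
            have h2 : (0 : ℚ) ≤ ∏ j ∈ s \ S, ((j : ℚ) / ((j : ℚ) - 1)) ^ k := by
              refine Finset.prod_nonneg fun j hj => ?_
              have := hratio1 j (Finset.mem_sdiff.mp hj).1
              linarith
            exact le_mul_of_one_le_right h2 h1
        _ = (n : ℚ) ^ k := by rw [Finset.prod_pow, telescope n hn]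
    calc (∏ j ∈ S, F k C j) * ∏ j ∈ s \ S, F k (fun β => 1 - C β) j
        ≤ (∏ j ∈ S, F k C j) * (n : ℚ) ^ k := mul_le_mul_of_nonneg_left hdiff hSnn
      _ = (n : ℚ) ^ k * ∏ j ∈ S, F k C j := by ring
  have hlam : 0 ≤ ∑ j ∈ s, F k C j := Finset.sum_nonneg hFnn
  have hesymm : ∑ S ∈ s.powersetCard p, ∏ j ∈ S, F k C j
      ≤ (∑ j ∈ s, F k C j) ^ p / (p.factorial : ℚ) := by
    rw [le_div_iff₀ (by positivity)]
    calc (∑ S ∈ s.powersetCard p, ∏ j ∈ S, F k C j) * (p.factorial : ℚ)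
        = (p.factorial : ℚ) * ∑ S ∈ s.powersetCard p, ∏ j ∈ S, F k C j := by ring
      _ ≤ _ := esymm_bound s (F k C) hFnn p
  have hfac : ((n.factorial : ℚ)) = ((n - 1).factorial : ℚ) * (n : ℚ) := by
    have := Nat.mul_factorial_pred (by omega : n ≠ 0)
    exact_mod_cast (by rw [← this]; ring_nf : (n.factorial : ℚ) = (((n-1).factorial * n : ℕ) : ℚ))
  calc ((n - 1).factorial : ℚ) ^ k *
        ∑ S ∈ s.powersetCard p, (∏ j ∈ S, F k C j) * ∏ j ∈ s \ S, F k (fun β => 1 - C β) j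
      ≤ ((n - 1).factorial : ℚ) ^ k * ∑ S ∈ s.powersetCard p, (n : ℚ) ^ k * ∏ j ∈ S, F k C j :=
        mul_le_mul_of_nonneg_left (Finset.sum_le_sum hterm) (le_of_lt hnfac)
    _ = (n.factorial : ℚ) ^ k * ∑ S ∈ s.powersetCard p, ∏ j ∈ S, F k C j := by
        rw [← Finset.mul_sum, hfac]; ring
    _ ≤ (n.factorial : ℚ) ^ k * ((∑ j ∈ s, F k C j) ^ p / (p.factorial : ℚ)) :=
        mul_le_mul_of_nonneg_left hesymm (by positivity)
    _ = (n.factorial : ℚ) ^ k * (∑ j ∈ s, F k C j) ^ p / (p.factorial : ℚ) := by ring
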